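/- Let G_{t,i} = ϑ_{t,i} δ^{-1} A^H B^{t-i} and H_{t,i} = ϑ_{t,i}(δ^{-1} W_{t-i} − w_{t-i} I) with W_k = A^H B^k A, w_k = (1/M) tr{W_k}, δ = M/N. Then (1/N) tr{G_{t,i}^H G_{t',j}} = ϑ_{t,i} ϑ_{t',j} δ^{-1} w_{t+t'-i-j} and (1/N) tr{H_{t,i}^H H_{t',j}} = ϑ_{t,i} ϑ_{t',j} ( δ^{-1}(λ† w_{t+t'-i-j} − w_{t+t'-i-j+1}) − w_{t-i} w_{t'-j} ). -/

import Mathlib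

/-! Since `B` is Hermitian, `Gᴴ G'` is a multiple of `B^a A Aᴴ B^b`, whose trace is
`tr (Aᴴ B^(a+b) A) = M w_(a+b)` by cyclicity. In `W_a W_b = Aᴴ B^a (A Aᴴ) B^b A` the middle factor
`A Aᴴ = λ† I - B` gives `λ† W_(a+b) - W_(a+b+1)`; as `H` is Hermitian too, expanding `H H'` and
using `δ = M/N` leaves the second formula. -/

open Matrix

namespace Matrix

variable {m n R : Type*} [CommRing R]

theorem mul_pow_mul_mul_mul_pow_mul [Fintype m] [Fintype n] [DecidableEq m] {B : Matrix m m R}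
    {X : Matrix n m R} {Y : Matrix m n R} {c : R} (hYX : Y * X = c • 1 - B) (a b : ℕ) :
    X * B ^ a * Y * (X * B ^ b * Y) = c • (X * B ^ (a + b) * Y) - X * B ^ (a + b + 1) * Y := by
  calc X * B ^ a * Y * (X * B ^ b * Y) = X * B ^ a * (Y * X) * B ^ b * Y := by
        simp only [Matrix.mul_assoc]
    _ = _ := by
        rw [hYX, add_assoc, add_comm b, pow_add, pow_add, pow_add, pow_one]
        simp only [Matrix.mul_sub, Matrix.sub_mul, Matrix.mul_smul, Matrix.smul_mul,
          Matrix.mul_one, Matrix.mul_assoc]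

theorem trace_smul_sub_smul_one_mul_smul_sub_smul_one [Fintype n] [DecidableEq n]
    (P Q : Matrix n n R) (x y x' y' : R) :
    ((x • P - y • 1) * (x' • Q - y' • 1)).trace
      = x * x' * (P * Q).trace - x * y' * P.trace - y * x' * Q.trace
        + y * y' * Fintype.card n := by
  simp only [Matrix.mul_sub, Matrix.sub_mul, Matrix.smul_mul, Matrix.mul_smul, Matrix.mul_one,
    Matrix.one_mul, trace_sub, trace_smul, trace_one, smul_eq_mul]
  ring

variable [StarRing R]

theorem isHermitian_smul_one_sub_mul_conjTranspose [Fintype n] [DecidableEq m] {c : R}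
    (hc : IsSelfAdjoint c) (A : Matrix m n R) : (c • 1 - A * Aᴴ).IsHermitian :=
  (isHermitian_one.smul hc).sub (isHermitian_mul_conjTranspose_self A)

theorem IsHermitian.isSelfAdjoint_trace [Fintype n] {A : Matrix n n R} (hA : A.IsHermitian) :
    IsSelfAdjoint A.trace := by
  rw [IsSelfAdjoint, ← trace_conjTranspose, hA.eq]

theorem trace_conjTranspose_mul_pow_mul_mul_pow [Fintype m] [Fintype n] [DecidableEq m]
    {B : Matrix m m R} (hB : B.IsHermitian) (A : Matrix m n R) (p q : ℕ) :
    ((Aᴴ * B ^ p)ᴴ * (Aᴴ * B ^ q)).trace = (Aᴴ * B ^ (p + q) * A).trace := by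
  rw [conjTranspose_mul, conjTranspose_conjTranspose, (hB.pow p).eq, trace_mul_comm,
    add_comm p q, pow_add]
  simp only [Matrix.mul_assoc]

end Matrix

/-- State-evolution coefficients of BO-GMAMP: with `B = λ†I − AAᴴ`, `W_k = Aᴴ Bᵏ A`,
`w_k = (1/M) tr W_k`, `δ = M/N`, `G_{t,i} = ϑ_{t,i} δ⁻¹ Aᴴ B^{t−i}` and
`H_{t,i} = ϑ_{t,i}(δ⁻¹ W_{t−i} − w_{t−i} I)`:
`(1/N) tr{G_{t,i}ᴴ G_{t',j}} = ϑ_{t,i} ϑ_{t',j} δ⁻¹ w_{t+t'−i−j}` and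
`(1/N) tr{H_{t,i}ᴴ H_{t',j}} = ϑ_{t,i} ϑ_{t',j}(δ⁻¹(λ† w_{t+t'−i−j} − w_{t+t'−i−j+1}) − w_{t−i} w_{t'−j})`. -/
theorem stmt19 {M N : ℕ} (hM : 0 < M) (hN : 0 < N)
    (A : Matrix (Fin M) (Fin N) ℂ) (lam : ℝ)
    (B : Matrix (Fin M) (Fin M) ℂ)
    (hB : B = (lam : ℂ) • (1 : Matrix (Fin M) (Fin M) ℂ) - A * Aᴴ)
    (W : ℕ → Matrix (Fin N) (Fin N) ℂ) (hW : ∀ k, W k = Aᴴ * B ^ k * A)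
    (w : ℕ → ℂ) (hw : ∀ k, w k = (M : ℂ)⁻¹ * (W k).trace)
    (δ : ℂ) (hδ : δ = (M : ℂ) / (N : ℂ))
    (t i t' j : ℕ) (hi : i ≤ t) (hj : j ≤ t')
    (ϑ ϑ' : ℝ)
    (G G' : Matrix (Fin N) (Fin M) ℂ)
    (hG : G = (ϑ : ℂ) • δ⁻¹ • (Aᴴ * B ^ (t - i)))
    (hG' : G' = (ϑ' : ℂ) • δ⁻¹ • (Aᴴ * B ^ (t' - j)))
    (H H' : Matrix (Fin N) (Fin N) ℂ)
    (hH : H = (ϑ : ℂ) • (δ⁻¹ • W (t - i) - w (t - i) • (1 : Matrix (Fin N) (Fin N) ℂ)))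
    (hH' : H' = (ϑ' : ℂ) • (δ⁻¹ • W (t' - j) - w (t' - j) • (1 : Matrix (Fin N) (Fin N) ℂ))) :
    (N : ℂ)⁻¹ * (Gᴴ * G').trace = (ϑ : ℂ) * (ϑ' : ℂ) * δ⁻¹ * w (t + t' - i - j)
    ∧ (N : ℂ)⁻¹ * (Hᴴ * H').trace
        = (ϑ : ℂ) * (ϑ' : ℂ) *
            (δ⁻¹ * ((lam : ℂ) * w (t + t' - i - j) - w (t + t' - i - j + 1))
              - w (t - i) * w (t' - j)) := by
  have hM0 : (M : ℂ) ≠ 0 := Nat.cast_ne_zero.mpr hM.ne'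
  have hN0 : (N : ℂ) ≠ 0 := Nat.cast_ne_zero.mpr hN.ne'
  have hϑ_real (x : ℝ) : IsSelfAdjoint (x : ℂ) := Complex.conj_ofReal x
  have hB_herm : B.IsHermitian := hB ▸ isHermitian_smul_one_sub_mul_conjTranspose (hϑ_real lam) A
  have hW_herm (k : ℕ) : (W k).IsHermitian :=
    hW k ▸ isHermitian_conjTranspose_mul_mul A (hB_herm.pow k)
  have hWW (a b : ℕ) : W a * W b = (lam : ℂ) • W (a + b) - W (a + b + 1) := by
    simp only [hW]
    exact mul_pow_mul_mul_mul_pow_mul (by rw [hB]; abel) a b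
  have htrace (k : ℕ) : (W k).trace = M * w k := by rw [hw, mul_inv_cancel_left₀ hM0]
  have hw_real (k : ℕ) : IsSelfAdjoint (w k) :=
    hw k ▸ (IsSelfAdjoint.natCast M).inv₀.mul (hW_herm k).isSelfAdjoint_trace
  have hδ_real : IsSelfAdjoint δ⁻¹ := hδ ▸ ((IsSelfAdjoint.natCast M).div (.natCast N)).inv₀
  rw [show t + t' - i - j = (t - i) + (t' - j) by omega]
  constructor
  · rw [hG, hG', conjTranspose_smul, conjTranspose_smul, (hϑ_real ϑ).star_eq, hδ_real.star_eq,
      Matrix.smul_mul, Matrix.mul_smul, Matrix.smul_mul, Matrix.mul_smul]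
    simp only [trace_smul, trace_conjTranspose_mul_pow_mul_mul_pow hB_herm, ← hW, htrace,
      smul_eq_mul, hδ]
    field_simp
  · have hH_herm : Hᴴ = H := by
      rw [hH]
      exact (((hW_herm _).smul hδ_real).sub (isHermitian_one.smul (hw_real _))).smul (hϑ_real ϑ)
    rw [hH_herm, hH, hH', smul_mul_smul_comm, trace_smul,
      trace_smul_sub_smul_one_mul_smul_sub_smul_one, hWW, trace_sub, trace_smul]
    simp only [htrace, Fintype.card_fin, smul_eq_mul, hδ]
    field_simp
    ring
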